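/- 2·D_MM(n) ≤ D_RB(2n): for any point set P of 2n points with a perfect matching admitting a flip sequence of length m, there exists a 2-colored point set of 4n points (2n red, 2n blue) with a red-blue perfect matching of 2n segments admitting a flip sequence of length 2m, obtained by duplicating each point into an arbitrarily close red-blue pair and simulating each monochromatic flip by two red-blue flips. -/

import Mathlib

open scoped Classical

noncomputable section

/-- The plane. -/
abbrev Pl := ℝ × ℝ
/-- A segment, as an ordered pair of endpoints. -/
abbrev Seg := Pl × Pl

/-- The set of points of a segment. -/
def segSet (s : Seg) : Set Pl := segment ℝ s.1 s.2

/-- Two segments cross: they intersect in exactly one point which is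
not an endpoint of either. -/
def Cross (s t : Seg) : Prop :=
  ∃ x : Pl, segSet s ∩ segSet t = {x} ∧ x ≠ s.1 ∧ x ≠ s.2 ∧ x ≠ t.1 ∧ x ≠ t.2

/-- The line through two points. -/
def lineThrough (p q : Pl) : Set Pl := {x | Collinear ℝ ({p, q, x} : Set Pl)}

/-- A line crosses a segment: they intersect in exactly one point which is
not an endpoint of the segment. -/
def LineCross (l : Set Pl) (s : Seg) : Prop :=
  ∃ x : Pl, l ∩ segSet s = {x} ∧ x ≠ s.1 ∧ x ≠ s.2

/-- Signed side of the line through `a` and `b` on which `x` lies. -/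
def sideVal (a b x : Pl) : ℝ :=
  (b.1 - a.1) * (x.2 - a.2) - (b.2 - a.2) * (x.1 - a.1)

/-- General position: no three (distinct) points of `S` are collinear. -/
def GenPos (S : Set Pl) : Prop :=
  ∀ a ∈ S, ∀ b ∈ S, ∀ c ∈ S, a ≠ b → a ≠ c → b ≠ c → ¬ Collinear ℝ ({a, b, c} : Set Pl)

/-- Strictly convex position. -/
def ConvexPos (S : Set Pl) : Prop := ∀ p ∈ S, p ∉ convexHull ℝ (S \ {p})

/-- A set of segments is a matching: no degenerate segment and all endpoints distinct. -/
def IsMatching (M : Finset Seg) : Prop :=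
  (∀ s ∈ M, s.1 ≠ s.2) ∧
  ∀ s ∈ M, ∀ t ∈ M, s ≠ t → ({s.1, s.2} : Set Pl) ∩ {t.1, t.2} = ∅

/-- A perfect matching on the point set `P`. -/
def IsPM (P : Finset Pl) (M : Finset Seg) : Prop :=
  IsMatching M ∧ (∀ s ∈ M, s.1 ∈ P ∧ s.2 ∈ P) ∧
  ∀ p ∈ P, ∃ s ∈ M, p = s.1 ∨ p = s.2

/-- Number of (unordered) crossing pairs of segments of `M`. -/
def phiX (M : Finset Seg) : ℕ :=
  Set.ncard {z : Sym2 Seg | ∃ u t : Seg, z = s(u, t) ∧ u ∈ M ∧ t ∈ M ∧ Cross u t}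

/-- Number of segments of `M` crossed by the line `l`. -/
def phiLine (l : Set Pl) (M : Finset Seg) : ℕ :=
  Set.ncard {s : Seg | s ∈ M ∧ LineCross l s}

/-- All lines through two points of `P`. -/
def linesOf (P : Finset Pl) : Set (Set Pl) :=
  {l | ∃ p ∈ P, ∃ q ∈ P, p ≠ q ∧ l = lineThrough p q}

/-- The line potential with respect to a set of lines `L`. -/
def phiL (L : Set (Set Pl)) (M : Finset Seg) : ℕ := ∑ᶠ l ∈ L, phiLine l M

/-- A flip in the matching version: replace a crossing pair by one of the two
non-crossing pairs on the same four endpoints. -/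
def IsFlip (M M' : Finset Seg) : Prop :=
  ∃ p1 p2 p3 p4 : Pl,
    Cross (p1, p3) (p2, p4) ∧ (p1, p3) ∈ M ∧ (p2, p4) ∈ M ∧
    ((¬ Cross (p1, p4) (p2, p3) ∧ M' = (M \ {(p1, p3), (p2, p4)}) ∪ {(p1, p4), (p2, p3)}) ∨
     (¬ Cross (p1, p2) (p3, p4) ∧ M' = (M \ {(p1, p3), (p2, p4)}) ∪ {(p1, p2), (p3, p4)}))

/-- `t1, t2` reconnect the four endpoints of `s1, s2` forming a 4-cycle. -/
def Rewires (s1 s2 t1 t2 : Seg) : Prop :=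
  ∃ a b c d : Pl, ({s1.1, s1.2} : Set Pl) = {a, b} ∧ ({s2.1, s2.2} : Set Pl) = {c, d} ∧
    ((({t1.1, t1.2} : Set Pl) = {a, c} ∧ ({t2.1, t2.2} : Set Pl) = {b, d}) ∨
     (({t1.1, t1.2} : Set Pl) = {a, d} ∧ ({t2.1, t2.2} : Set Pl) = {b, c}))

/-- A flip in the multigraph (multiset) version. -/
def IsFlipMS (M M' : Multiset Seg) : Prop :=
  ∃ p1 p2 p3 p4 : Pl, Cross (p1, p3) (p2, p4) ∧ (p1, p3) ∈ M ∧ (p2, p4) ∈ M ∧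
    ∃ t1 t2 : Seg, Rewires (p1, p3) (p2, p4) t1 t2 ∧ ¬ Cross t1 t2 ∧
      M' = t1 ::ₘ t2 ::ₘ ((M.erase (p1, p3)).erase (p2, p4))

/-- A red-blue perfect matching: first coordinates red, second coordinates blue. -/
def IsRBPM (R B : Finset Pl) (M : Finset Seg) : Prop :=
  IsMatching M ∧ (∀ s ∈ M, s.1 ∈ R ∧ s.2 ∈ B) ∧
  (∀ p ∈ R, ∃ s ∈ M, p = s.1) ∧ (∀ p ∈ B, ∃ s ∈ M, p = s.2)

/-- A flip in the red-blue matching version (the replacement pair is forced). -/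
def IsRBFlip (M M' : Finset Seg) : Prop :=
  ∃ r1 b1 r2 b2 : Pl, Cross (r1, b1) (r2, b2) ∧ (r1, b1) ∈ M ∧ (r2, b2) ∈ M ∧
    ¬ Cross (r1, b2) (r2, b1) ∧ M' = (M \ {(r1, b1), (r2, b2)}) ∪ {(r1, b2), (r2, b1)}

/-- `T` is (the edge set of) a tour on `N` points. -/
def IsTour (T : Finset Seg) (N : ℕ) : Prop :=
  3 ≤ N ∧ ∃ v : Fin N → Pl, Function.Injective v ∧
    T = Finset.image (fun i : Fin N => (v i, v (finRotate N i))) Finset.univ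

/-- A flip in the TSP version: remove two crossing tour edges and reconnect the
four endpoints. -/
def IsTSPFlip (T T' : Finset Seg) : Prop :=
  ∃ s1 s2 t1 t2 : Seg, Cross s1 s2 ∧ s1 ∈ T ∧ s2 ∈ T ∧ Rewires s1 s2 t1 t2 ∧
    T' = (T \ {s1, s2}) ∪ {t1, t2}

/-- `a` and `b` are consecutive points on the convex-hull boundary of `Q`. -/
def HullEdge (Q : Finset Pl) (a b : Pl) : Prop :=
  a ∈ Q ∧ b ∈ Q ∧ a ≠ b ∧
  ((∀ c ∈ Q, c ≠ a → c ≠ b → 0 < sideVal a b c) ∨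
   (∀ c ∈ Q, c ≠ a → c ≠ b → sideVal a b c < 0))

/-- The line-potential drop of a flip, independent of the ambient matching. -/
def flipDrop (P : Finset Pl) (p1 p2 p3 p4 : Pl) : ℤ :=
  ∑ᶠ l ∈ linesOf P,
    ((phiLine l {(p1, p3), (p2, p4)} : ℤ) - (phiLine l {(p1, p4), (p2, p3)} : ℤ))

/-!
Put a blue twin `p + ε • v` next to every red point `p` of `P`, so that a segment `ab` of a
perfect matching becomes the two red-blue segments `a (b + ε • v)` and `b (a + ε • v)`. For small
`ε` these segments cross exactly when the original ones do: in general position a crossing is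
described by strict orientation inequalities, and the absence of a crossing by disjointness of two
compact segments, and both conditions survive a small perturbation. A flip replacing `x1 y1` and
`x2 y2` by `x1 y2` and `x2 y1` is then simulated by two red-blue flips, first on the segments
`x1 (y1 + ε • v)`, `x2 (y2 + ε • v)` and then on the reversed copies `y1 (x1 + ε • v)`,
`y2 (x2 + ε • v)`.
-/

open Filter Topology Metric

lemma Cross.symm {s t : Seg} (h : Cross s t) : Cross t s := by
  obtain ⟨x, hx, h1, h2, h3, h4⟩ := h
  exact ⟨x, by rw [Set.inter_comm, hx], h3, h4, h1, h2⟩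

lemma cross_comm {s t : Seg} : Cross s t ↔ Cross t s := ⟨Cross.symm, Cross.symm⟩

lemma cross_swap_left {a b : Pl} {t : Seg} : Cross (b, a) t ↔ Cross (a, b) t := by
  simp only [Cross, segSet, segment_symm ℝ b a]
  exact exists_congr fun x => by tauto

lemma cross_swap_right {a b : Pl} {s : Seg} : Cross s (b, a) ↔ Cross s (a, b) := by
  rw [cross_comm, cross_swap_left, cross_comm]

lemma Cross.ne {a b c d : Pl} (h : Cross (a, b) (c, d)) :
    a ≠ b ∧ a ≠ c ∧ a ≠ d ∧ b ≠ c ∧ b ≠ d ∧ c ≠ d := by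
  obtain ⟨x, hx, hxa, hxb, hxc, hxd⟩ := h
  have hmem : ∀ y ∈ segment ℝ a b, y ∈ segment ℝ c d → y = x := fun y h1 h2 =>
    (Set.ext_iff.1 hx y).1 ⟨h1, h2⟩
  have hx1 : x ∈ segment ℝ a b := ((Set.ext_iff.1 hx x).2 rfl).1
  have hx2 : x ∈ segment ℝ c d := ((Set.ext_iff.1 hx x).2 rfl).2
  refine ⟨?_, ?_, ?_, ?_, ?_, ?_⟩ <;> rintro rfl
  · exact hxa (by simpa using hx1)
  · exact hxa (hmem _ (left_mem_segment ..) (left_mem_segment ..)).symm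
  · exact hxa (hmem _ (left_mem_segment ..) (right_mem_segment ..)).symm
  · exact hxb (hmem _ (right_mem_segment ..) (left_mem_segment ..)).symm
  · exact hxb (hmem _ (right_mem_segment ..) (right_mem_segment ..)).symm
  · exact hxc (by simpa using hx2)

lemma not_cross_of_disjoint {s t : Seg} (h : Disjoint (segSet s) (segSet t)) : ¬ Cross s t := by
  rintro ⟨x, hx, -⟩
  exact Set.singleton_ne_empty x (hx ▸ Set.disjoint_iff_inter_eq_empty.1 h)

lemma sideVal_add_smul_sub (a b c d : Pl) (t : ℝ) :
    sideVal c d (a + t • (b - a)) = (1 - t) * sideVal c d a + t * sideVal c d b := by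
  simp only [sideVal, Prod.fst_add, Prod.snd_add, Prod.smul_fst, Prod.smul_snd, Prod.fst_sub,
    Prod.snd_sub, smul_eq_mul]
  ring

lemma sideVal_eq_zero_of_mem_segment {c d y : Pl} (hy : y ∈ segment ℝ c d) :
    sideVal c d y = 0 := by
  obtain ⟨t, -, rfl⟩ := (segment_eq_image' ℝ c d ▸ hy : y ∈ _)
  rw [sideVal_add_smul_sub]
  simp only [sideVal]
  ring

lemma sideVal_mul_neg_of_mem_segment {a b c d y : Pl} (hy : y ∈ segment ℝ a b)
    (hyl : sideVal c d y = 0) (ha : sideVal c d a ≠ 0) (hb : sideVal c d b ≠ 0) :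
    sideVal c d a * sideVal c d b < 0 := by
  obtain ⟨t, ⟨ht0, ht1⟩, rfl⟩ := (segment_eq_image' ℝ a b ▸ hy : y ∈ _)
  rw [sideVal_add_smul_sub] at hyl
  have ht0' : t ≠ 0 := by rintro rfl; simp_all
  have ht1' : t ≠ 1 := by rintro rfl; simp_all
  have ht : 0 < t := lt_of_le_of_ne ht0 (Ne.symm ht0')
  have h1t : 0 < 1 - t := sub_pos.2 (lt_of_le_of_ne ht1 ht1')
  have key : (1 - t) * (sideVal c d a * sideVal c d b) = -(t * sideVal c d b ^ 2) := by
    linear_combination sideVal c d b * hyl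
  have : 0 < t * sideVal c d b ^ 2 := by positivity
  by_contra! hn
  nlinarith [mul_nonneg h1t.le hn]

lemma eq_of_sideVal_eq_zero {a b c d x y : Pl} (hpar : sideVal a b d ≠ sideVal a b c)
    (hxab : sideVal a b x = 0) (hyab : sideVal a b y = 0)
    (hxcd : sideVal c d x = 0) (hycd : sideVal c d y = 0) : x = y := by
  have hK : sideVal a b d - sideVal a b c ≠ 0 := sub_ne_zero.2 hpar
  unfold sideVal at *
  ext <;> refine sub_eq_zero.1 (mul_right_cancel₀ hK ?_)
  · linear_combination (d.1 - c.1) * (hxab - hyab) - (b.1 - a.1) * (hxcd - hycd)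
  · linear_combination (d.2 - c.2) * (hxab - hyab) - (b.2 - a.2) * (hxcd - hycd)

lemma exists_mem_segment_sideVal_eq_zero {a b c d : Pl}
    (h : sideVal c d a * sideVal c d b < 0) : ∃ x ∈ segment ℝ a b, sideVal c d x = 0 := by
  set A := sideVal c d a
  set B := sideVal c d b
  have hAB : A - B ≠ 0 := by
    intro h'
    rw [sub_eq_zero.1 h'] at h
    nlinarith [sq_nonneg B]
  refine ⟨a + (A / (A - B)) • (b - a), segment_eq_image' ℝ a b ▸ ⟨A / (A - B), ?_, rfl⟩, ?_⟩
  · rcases hAB.lt_or_gt with hneg | hpos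
    · exact ⟨div_nonneg_of_nonpos (by nlinarith) hneg.le,
        (div_le_one_of_neg hneg).2 (by nlinarith)⟩
    · exact ⟨div_nonneg (by nlinarith) hpos.le, (div_le_one hpos).2 (by nlinarith)⟩
  · rw [sideVal_add_smul_sub]
    field_simp
    ring

lemma cross_of_sideVal {a b c d : Pl} (h1 : sideVal a b c * sideVal a b d < 0)
    (h2 : sideVal c d a * sideVal c d b < 0) : Cross (a, b) (c, d) := by
  obtain ⟨x, hxab, hxcd⟩ := exists_mem_segment_sideVal_eq_zero h2
  obtain ⟨y, hycd, hyab⟩ := exists_mem_segment_sideVal_eq_zero h1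
  have hpar : sideVal a b d ≠ sideVal a b c := by intro h; rw [h] at h1; nlinarith
  have huniq : ∀ z, sideVal a b z = 0 → sideVal c d z = 0 → z = x := fun z hz1 hz2 =>
    eq_of_sideVal_eq_zero hpar hz1 (sideVal_eq_zero_of_mem_segment hxab) hz2 hxcd
  obtain rfl : y = x := huniq y hyab (sideVal_eq_zero_of_mem_segment hycd)
  refine ⟨y, Set.eq_singleton_iff_unique_mem.2 ⟨⟨hxab, hycd⟩, fun z hz => huniq z
    (sideVal_eq_zero_of_mem_segment hz.1) (sideVal_eq_zero_of_mem_segment hz.2)⟩, ?_, ?_, ?_, ?_⟩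
  -- an endpoint lying on the other segment would make one of the four side values vanish
  all_goals rintro rfl
  all_goals simp_all

lemma eventually_cross_add_smul {a b c d : Pl} (h1 : sideVal a b c * sideVal a b d < 0)
    (h2 : sideVal c d a * sideVal c d b < 0) (v : Pl) :
    ∀ᶠ ε in 𝓝 (0 : ℝ), Cross (a, b + ε • v) (c, d + ε • v) := by
  have hcont : Continuous fun ε : ℝ =>
      (sideVal a (b + ε • v) c * sideVal a (b + ε • v) (d + ε • v),
        sideVal c (d + ε • v) a * sideVal c (d + ε • v) (b + ε • v)) := by
    simp only [sideVal]
    fun_prop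
  have hlim := hcont.tendsto 0
  simp only [zero_smul, add_zero] at hlim
  filter_upwards [(continuous_fst.tendsto _ |>.comp hlim).eventually_lt_const h1,
    (continuous_snd.tendsto _ |>.comp hlim).eventually_lt_const h2] with ε hε1 hε2
  exact cross_of_sideVal hε1 hε2

section Perturbation

variable {E : Type*} [NormedAddCommGroup E] [NormedSpace ℝ E]

lemma segment_add_subset_thickening {a b w : E} {δ : ℝ} (hw : ‖w‖ < δ) :
    segment ℝ a (b + w) ⊆ thickening δ (segment ℝ a b) := by
  rw [segment_eq_image']
  rintro _ ⟨t, ⟨ht0, ht1⟩, rfl⟩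
  refine mem_thickening_iff.2
    ⟨a + t • (b - a), segment_eq_image' ℝ a b ▸ ⟨t, ⟨ht0, ht1⟩, rfl⟩, ?_⟩
  rw [dist_eq_norm, show a + t • (b + w - a) - (a + t • (b - a)) = t • w by module, norm_smul,
    Real.norm_of_nonneg ht0]
  exact lt_of_le_of_lt (mul_le_of_le_one_left (norm_nonneg w) ht1) hw

lemma eventually_disjoint_segment_add_smul {a b c d : E}
    (h : Disjoint (segment ℝ a b) (segment ℝ c d)) (v : E) :
    ∀ᶠ ε in 𝓝 (0 : ℝ), Disjoint (segment ℝ a (b + ε • v)) (segment ℝ c (d + ε • v)) := by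
  have hcpt (p q : E) : IsCompact (segment ℝ p q) :=
    convexHull_pair (𝕜 := ℝ) p q ▸ (Set.toFinite _).isCompact_convexHull ℝ
  obtain ⟨δ, hδ, hthick⟩ := h.exists_thickenings (hcpt a b) (hcpt c d).isClosed
  have hsmall : ∀ᶠ ε in 𝓝 (0 : ℝ), ‖ε • v‖ < δ := by
    have : Tendsto (fun ε : ℝ => ‖ε • v‖) (𝓝 0) (𝓝 0) := by
      simpa using ((continuous_id.smul (continuous_const (y := v))).norm.tendsto (0 : ℝ))
    exact this.eventually_lt_const hδ
  filter_upwards [hsmall] with ε hε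
  exact hthick.mono (segment_add_subset_thickening hε) (segment_add_subset_thickening hε)

end Perturbation

lemma collinear_of_sideVal_eq_zero {a b c : Pl} (hab : a ≠ b) (h : sideVal a b c = 0) :
    Collinear ℝ ({a, b, c} : Set Pl) := by
  have hden : (b.1 - a.1) ^ 2 + (b.2 - a.2) ^ 2 ≠ 0 := by
    intro h0
    apply hab
    ext <;> nlinarith [sq_nonneg (b.1 - a.1), sq_nonneg (b.2 - a.2)]
  -- the parameter of the orthogonal projection of `c` onto the line `ab`
  have hc : c = AffineMap.lineMap a b
      (((b.1 - a.1) * (c.1 - a.1) + (b.2 - a.2) * (c.2 - a.2)) /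
        ((b.1 - a.1) ^ 2 + (b.2 - a.2) ^ 2)) := by
    unfold sideVal at h
    ext <;> simp only [AffineMap.lineMap_apply, vsub_eq_sub, vadd_eq_add, Prod.fst_add,
      Prod.snd_add, Prod.smul_fst, Prod.smul_snd, Prod.fst_sub, Prod.snd_sub, smul_eq_mul] <;>
      field_simp
    · linear_combination (-(b.2 - a.2)) * h
    · linear_combination (b.1 - a.1) * h
  have := collinear_insert_of_mem_affineSpan_pair
    (hc ▸ AffineMap.lineMap_mem_affineSpan_pair _ a b)
  rwa [Set.insert_comm c, Set.pair_comm c] at this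

lemma GenPos.sideVal_ne_zero {S : Set Pl} (hS : GenPos S) {a b c : Pl} (ha : a ∈ S)
    (hb : b ∈ S) (hc : c ∈ S) (hab : a ≠ b) (hac : a ≠ c) (hbc : b ≠ c) : sideVal a b c ≠ 0 :=
  fun h => hS a ha b hb c hc hab hac hbc (collinear_of_sideVal_eq_zero hab h)

lemma GenPos.eventually_cross_add_smul_iff {S : Set Pl} (hS : GenPos S) (v : Pl)
    {a b c d : Pl} (ha : a ∈ S) (hb : b ∈ S) (hc : c ∈ S) (hd : d ∈ S)
    (hab : a ≠ b) (hac : a ≠ c) (had : a ≠ d) (hbc : b ≠ c) (hbd : b ≠ d) (hcd : c ≠ d) :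
    ∀ᶠ ε in 𝓝 (0 : ℝ), (Cross (a, b + ε • v) (c, d + ε • v) ↔ Cross (a, b) (c, d)) := by
  have hsigns : ∀ y ∈ segment ℝ a b, y ∈ segment ℝ c d →
      sideVal a b c * sideVal a b d < 0 ∧ sideVal c d a * sideVal c d b < 0 := fun y hy1 hy2 =>
    ⟨sideVal_mul_neg_of_mem_segment hy2 (sideVal_eq_zero_of_mem_segment hy1)
      (hS.sideVal_ne_zero ha hb hc hab hac hbc) (hS.sideVal_ne_zero ha hb hd hab had hbd),
    sideVal_mul_neg_of_mem_segment hy1 (sideVal_eq_zero_of_mem_segment hy2)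
      (hS.sideVal_ne_zero hc hd ha hcd hac.symm had.symm)
      (hS.sideVal_ne_zero hc hd hb hcd hbc.symm hbd.symm)⟩
  by_cases h : Cross (a, b) (c, d)
  · obtain ⟨x, hx, -⟩ := id h
    obtain ⟨hx1, hx2⟩ : x ∈ segment ℝ a b ∩ segment ℝ c d := hx ▸ rfl
    obtain ⟨h1, h2⟩ := hsigns x hx1 hx2
    filter_upwards [eventually_cross_add_smul h1 h2 v] with ε hε using iff_of_true hε h
  · have hdisj : Disjoint (segment ℝ a b) (segment ℝ c d) :=
      Set.disjoint_left.2 fun y hy1 hy2 =>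
        h (cross_of_sideVal (hsigns y hy1 hy2).1 (hsigns y hy1 hy2).2)
    filter_upwards [eventually_disjoint_segment_add_smul hdisj v] with ε hε
    exact iff_of_false (not_cross_of_disjoint hε) h

def PreservesCross (P : Finset Pl) (β : Pl → Pl) : Prop :=
  ∀ a ∈ P, ∀ b ∈ P, ∀ c ∈ P, ∀ d ∈ P, a ≠ b → a ≠ c → a ≠ d → b ≠ c → b ≠ d → c ≠ d →
    (Cross (a, β b) (c, β d) ↔ Cross (a, b) (c, d))

lemma GenPos.eventually_preservesCross {P : Finset Pl} (hP : GenPos (P : Set Pl)) (v : Pl) :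
    ∀ᶠ ε in 𝓝 (0 : ℝ), PreservesCross P (· + ε • v) := by
  simp only [PreservesCross, eventually_all_finset, eventually_imp_distrib_left]
  intro a ha b hb c hc d hd hab hac had hbc hbd hcd
  exact hP.eventually_cross_add_smul_iff v ha hb hc hd hab hac had hbc hbd hcd

lemma eventually_disjoint_image_add_smul (P : Finset Pl) {v : Pl} (hv : v ≠ 0) :
    ∀ᶠ ε in 𝓝[≠] (0 : ℝ), Disjoint P (P.image (· + ε • v)) := by
  have hne (p q : Pl) : ∀ᶠ ε in 𝓝[≠] (0 : ℝ), p + ε • v ≠ q := by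
    obtain rfl | hpq := eq_or_ne p q
    · filter_upwards [self_mem_nhdsWithin] with ε hε
      simpa [hv] using hε
    · have hcont : Continuous fun ε : ℝ => p + ε • v := by fun_prop
      exact ((hcont.tendsto' 0 p (by simp)).mono_left nhdsWithin_le_nhds).eventually_ne hpq
  filter_upwards [(eventually_all_finset P).2 fun p _ => (eventually_all_finset P).2 fun q _ =>
    hne p q] with ε hε
  rw [Finset.disjoint_left]
  intro q hq hq'
  obtain ⟨p, hp, rfl⟩ := Finset.mem_image.1 hq'
  exact hε p hp _ hq rfl

def darts (A : Finset Seg) : Finset Seg := A ∪ A.image Prod.swap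

lemma mem_darts {A : Finset Seg} {a b : Pl} : (a, b) ∈ darts A ↔ (a, b) ∈ A ∨ (b, a) ∈ A := by
  simp [darts, Prod.swap_eq_iff_eq_swap]

lemma mem_darts_comm {A : Finset Seg} {a b : Pl} : (a, b) ∈ darts A ↔ (b, a) ∈ darts A := by
  simp only [mem_darts, or_comm]

def twin (β : Pl → Pl) (A : Finset Seg) : Finset Seg := (darts A).image (Prod.map id β)

lemma mem_twin {β : Pl → Pl} {A : Finset Seg} {s : Seg} :
    s ∈ twin β A ↔ ∃ a b, (a, b) ∈ darts A ∧ s = (a, β b) := by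
  rw [twin, Finset.mem_image]
  constructor
  · rintro ⟨⟨a, b⟩, h, rfl⟩
    exact ⟨a, b, h, rfl⟩
  · rintro ⟨a, b, h, rfl⟩
    exact ⟨(a, b), h, rfl⟩

def rewire (F : Finset Seg) (r1 b1 r2 b2 : Pl) : Finset Seg :=
  (F \ {(r1, b1), (r2, b2)}) ∪ {(r1, b2), (r2, b1)}

lemma mem_rewire {F : Finset Seg} {r1 b1 r2 b2 : Pl} {s : Seg} : s ∈ rewire F r1 b1 r2 b2 ↔
    (s ∈ F ∧ s ≠ (r1, b1) ∧ s ≠ (r2, b2)) ∨ s = (r1, b2) ∨ s = (r2, b1) := by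
  simp only [rewire, Finset.mem_union, Finset.mem_sdiff, Finset.mem_insert,
    Finset.mem_singleton, not_or]

lemma image_rewire {β : Pl → Pl} (hβ : Function.Injective β) (D : Finset Seg)
    (r1 b1 r2 b2 : Pl) : (rewire D r1 b1 r2 b2).image (Prod.map id β) =
      rewire (D.image (Prod.map id β)) r1 (β b1) r2 (β b2) := by
  simp [rewire, Finset.image_sdiff _ _ (Function.injective_id.prodMap hβ)]

lemma IsMatching.eq_of_mem {A : Finset Seg} (hA : IsMatching A) {s t : Seg} (hs : s ∈ A)
    (ht : t ∈ A) {p : Pl} (hps : p = s.1 ∨ p = s.2) (hpt : p = t.1 ∨ p = t.2) : s = t := by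
  by_contra hst
  exact (Set.eq_empty_iff_forall_notMem.1 (hA.2 s hs t ht hst)) p ⟨hps, hpt⟩

lemma IsMatching.injOn_fst {A : Finset Seg} (hA : IsMatching A) :
    Set.InjOn Prod.fst (A : Set Seg) :=
  fun _ hs _ ht h => hA.eq_of_mem hs ht (Or.inl rfl) (Or.inl h)

lemma IsMatching.injOn_snd {A : Finset Seg} (hA : IsMatching A) :
    Set.InjOn Prod.snd (A : Set Seg) :=
  fun _ hs _ ht h => hA.eq_of_mem hs ht (Or.inr rfl) (Or.inr h)

lemma IsMatching.swap_notMem {A : Finset Seg} (hA : IsMatching A) {a b : Pl} (h : (a, b) ∈ A) :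
    (b, a) ∉ A := by
  intro h'
  have := hA.eq_of_mem (p := a) h h' (by simp) (by simp)
  simp only [Prod.mk.injEq] at this
  exact hA.1 _ h this.1

lemma IsMatching.eq_of_mem_darts {A : Finset Seg} (hA : IsMatching A) {a b b' : Pl}
    (h : (a, b) ∈ darts A) (h' : (a, b') ∈ darts A) : b = b' := by
  rw [mem_darts] at h h'
  rcases h with h | h <;> rcases h' with h' | h' <;>
    have := hA.eq_of_mem (p := a) h h' (by simp) (by simp) <;> simp_all

lemma IsPM.mem_of_mem_darts {P : Finset Pl} {A : Finset Seg} (hA : IsPM P A) {a b : Pl}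
    (h : (a, b) ∈ darts A) : a ∈ P ∧ b ∈ P :=
  (mem_darts.1 h).elim (hA.2.1 _) fun h => (hA.2.1 _ h).symm

lemma isMatching_of_injOn {R B : Finset Pl} (hRB : Disjoint R B) {F : Finset Seg}
    (hF : ∀ s ∈ F, s.1 ∈ R ∧ s.2 ∈ B) (h1 : Set.InjOn Prod.fst (F : Set Seg))
    (h2 : Set.InjOn Prod.snd (F : Set Seg)) :
    IsMatching F := by
  have hne : ∀ s ∈ F, ∀ t ∈ F, s.1 ≠ t.2 := fun s hs t ht h =>
    Finset.disjoint_left.1 hRB (hF s hs).1 (h ▸ (hF t ht).2)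
  refine ⟨fun s hs => hne s hs s hs, fun s hs t ht hst => ?_⟩
  ext p
  simp only [Set.mem_inter_iff, Set.mem_insert_iff, Set.mem_singleton_iff,
    Set.mem_empty_iff_false, iff_false, not_and]
  rintro (rfl | rfl) (h | h)
  · exact hst (h1 hs ht h)
  · exact hne s hs t ht h
  · exact hne t ht s hs h.symm
  · exact hst (h2 hs ht h)

lemma IsRBPM.card_eq {R B : Finset Pl} {F : Finset Seg} (h : IsRBPM R B F) :
    F.card = R.card := by
  obtain ⟨(hM : IsMatching F), hF, hR, -⟩ := h
  have himage : F.image Prod.fst = R := by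
    ext p
    simp only [Finset.mem_image]
    refine ⟨fun ⟨s, hs, hsp⟩ => hsp ▸ (hF s hs).1, fun hp => ?_⟩
    obtain ⟨s, hs, rfl⟩ := hR p hp
    exact ⟨s, hs, rfl⟩
  rw [← himage, Finset.card_image_of_injOn hM.injOn_fst]

lemma injOn_fst_rewire {F : Finset Seg} (hF : Set.InjOn Prod.fst (F : Set Seg)) {r1 b1 r2 b2 : Pl}
    (h1 : (r1, b1) ∈ F) (h2 : (r2, b2) ∈ F) (hr : r1 ≠ r2) :
    Set.InjOn Prod.fst (rewire F r1 b1 r2 b2 : Set Seg) := by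
  intro s hs t ht hst
  simp only [Finset.mem_coe, mem_rewire] at hs ht
  rcases hs with ⟨hs, hs1, hs2⟩ | rfl | rfl <;> rcases ht with ⟨ht, ht1, ht2⟩ | rfl | rfl
  · exact hF hs ht hst
  · exact absurd (hF hs h1 hst) hs1
  · exact absurd (hF hs h2 hst) hs2
  · exact absurd (hF ht h1 hst.symm) ht1
  · rfl
  · exact absurd hst hr
  · exact absurd (hF ht h2 hst.symm) ht2
  · exact absurd hst.symm hr
  · rfl

lemma injOn_snd_rewire {F : Finset Seg} (hF : Set.InjOn Prod.snd (F : Set Seg)) {r1 b1 r2 b2 : Pl}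
    (h1 : (r1, b1) ∈ F) (h2 : (r2, b2) ∈ F) (hb : b1 ≠ b2) :
    Set.InjOn Prod.snd (rewire F r1 b1 r2 b2 : Set Seg) := by
  intro s hs t ht hst
  simp only [Finset.mem_coe, mem_rewire] at hs ht
  rcases hs with ⟨hs, hs1, hs2⟩ | rfl | rfl <;> rcases ht with ⟨ht, ht1, ht2⟩ | rfl | rfl
  · exact hF hs ht hst
  · exact absurd (hF hs h2 hst) hs2
  · exact absurd (hF hs h1 hst) hs1
  · exact absurd (hF ht h2 hst.symm) ht2
  · rfl
  · exact absurd hst.symm hb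
  · exact absurd (hF ht h1 hst.symm) ht1
  · exact absurd hst hb
  · rfl

lemma isRBPM_rewire {R B : Finset Pl} (hRB : Disjoint R B) {F : Finset Seg} (hF : IsRBPM R B F)
    {r1 b1 r2 b2 : Pl} (h1 : (r1, b1) ∈ F) (h2 : (r2, b2) ∈ F) (hr : r1 ≠ r2) :
    IsRBPM R B (rewire F r1 b1 r2 b2) := by
  obtain ⟨(hM : IsMatching F), hends, hR, hB⟩ := hF
  have hb : b1 ≠ b2 := fun h => hr (congrArg Prod.fst (hM.injOn_snd h1 h2 h))
  have hends' : ∀ s ∈ rewire F r1 b1 r2 b2, s.1 ∈ R ∧ s.2 ∈ B := by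
    intro s hs
    rcases mem_rewire.1 hs with ⟨hs, -⟩ | rfl | rfl
    · exact hends s hs
    · exact ⟨(hends _ h1).1, (hends _ h2).2⟩
    · exact ⟨(hends _ h2).1, (hends _ h1).2⟩
  refine ⟨isMatching_of_injOn hRB hends' (injOn_fst_rewire hM.injOn_fst h1 h2 hr)
    (injOn_snd_rewire hM.injOn_snd h1 h2 hb), hends', fun p hp => ?_, fun p hp => ?_⟩
  · obtain ⟨s, hs, rfl⟩ := hR p hp
    by_cases e1 : s = (r1, b1)
    · exact ⟨(r1, b2), mem_rewire.2 (Or.inr (Or.inl rfl)), by rw [e1]⟩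
    by_cases e2 : s = (r2, b2)
    · exact ⟨(r2, b1), mem_rewire.2 (Or.inr (Or.inr rfl)), by rw [e2]⟩
    exact ⟨s, mem_rewire.2 (Or.inl ⟨hs, e1, e2⟩), rfl⟩
  · obtain ⟨s, hs, rfl⟩ := hB p hp
    by_cases e1 : s = (r1, b1)
    · exact ⟨(r2, b1), mem_rewire.2 (Or.inr (Or.inr rfl)), by rw [e1]⟩
    by_cases e2 : s = (r2, b2)
    · exact ⟨(r1, b2), mem_rewire.2 (Or.inr (Or.inl rfl)), by rw [e2]⟩
    exact ⟨s, mem_rewire.2 (Or.inl ⟨hs, e1, e2⟩), rfl⟩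

lemma IsRBFlip.isRBPM {R B : Finset Pl} (hRB : Disjoint R B) {F F' : Finset Seg}
    (h : IsRBFlip F F') (hF : IsRBPM R B F) : IsRBPM R B F' := by
  obtain ⟨r1, b1, r2, b2, hc, h1, h2, -, rfl⟩ := h
  exact isRBPM_rewire hRB hF h1 h2 hc.ne.2.1

lemma isRBPM_twin {P : Finset Pl} {β : Pl → Pl} (hβ : Function.Injective β)
    (hdisj : Disjoint P (P.image β)) {A : Finset Seg} (hA : IsPM P A) :
    IsRBPM P (P.image β) (twin β A) := by
  have hcov' : ∀ p ∈ P, ∃ q, (p, q) ∈ darts A := by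
    intro p hp
    obtain ⟨⟨a, b⟩, hs, rfl | rfl⟩ := hA.2.2 p hp
    · exact ⟨b, mem_darts.2 (Or.inl hs)⟩
    · exact ⟨a, mem_darts.2 (Or.inr hs)⟩
  have hends' : ∀ s ∈ twin β A, s.1 ∈ P ∧ s.2 ∈ P.image β := by
    intro s hs
    obtain ⟨a, b, h, rfl⟩ := mem_twin.1 hs
    exact ⟨(hA.mem_of_mem_darts h).1, Finset.mem_image_of_mem β (hA.mem_of_mem_darts h).2⟩
  refine ⟨isMatching_of_injOn hdisj hends' ?_ ?_, hends', fun p hp => ?_, fun p hp => ?_⟩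
  · intro s hs t ht hst
    obtain ⟨a, b, h, rfl⟩ := mem_twin.1 hs
    obtain ⟨a', b', h', rfl⟩ := mem_twin.1 ht
    obtain rfl : a = a' := hst
    rw [hA.1.eq_of_mem_darts h h']
  · intro s hs t ht hst
    obtain ⟨a, b, h, rfl⟩ := mem_twin.1 hs
    obtain ⟨a', b', h', rfl⟩ := mem_twin.1 ht
    obtain rfl : b = b' := hβ hst
    rw [hA.1.eq_of_mem_darts (mem_darts_comm.1 h) (mem_darts_comm.1 h')]
  · obtain ⟨q, hq⟩ := hcov' p hp
    exact ⟨(p, β q), mem_twin.2 ⟨p, q, hq, rfl⟩, rfl⟩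
  · obtain ⟨q, hq, rfl⟩ := Finset.mem_image.1 hp
    obtain ⟨r, hr⟩ := hcov' q hq
    exact ⟨(r, β q), mem_twin.2 ⟨r, q, mem_darts_comm.1 hr, rfl⟩, rfl⟩

lemma IsFlip.exists_darts_eq {A A' : Finset Seg} (hA : IsMatching A) (h : IsFlip A A') :
    ∃ x1 y1 x2 y2 : Pl, Cross (x1, y1) (x2, y2) ∧ ¬ Cross (x1, y2) (x2, y1) ∧
      (x1, y1) ∈ darts A ∧ (x2, y2) ∈ darts A ∧
      darts A' = rewire (rewire (darts A) x1 y1 x2 y2) y1 x1 y2 x2 := by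
  obtain ⟨p1, p2, p3, p4, hc, h13, h24, hcase⟩ := h
  have n31 := hA.swap_notMem h13
  have n42 := hA.swap_notMem h24
  obtain ⟨h13', h12, h14, h32, h34, h24'⟩ := hc.ne
  rcases hcase with ⟨hnc, rfl⟩ | ⟨hnc, rfl⟩
  · refine ⟨p1, p3, p2, p4, hc, hnc, mem_darts.2 (Or.inl h13), mem_darts.2 (Or.inl h24), ?_⟩
    ext ⟨a, b⟩
    simp only [mem_darts, rewire, Finset.mem_union, Finset.mem_sdiff, Finset.mem_insert,
      Finset.mem_singleton, Prod.mk.injEq]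
    grind
  · refine ⟨p1, p3, p4, p2, cross_swap_right.2 hc, by rwa [cross_swap_right],
      mem_darts.2 (Or.inl h13), mem_darts.2 (Or.inr h24), ?_⟩
    ext ⟨a, b⟩
    simp only [mem_darts, rewire, Finset.mem_union, Finset.mem_sdiff, Finset.mem_insert,
      Finset.mem_singleton, Prod.mk.injEq]
    grind

lemma exists_isRBFlip_twin {P : Finset Pl} {β : Pl → Pl} (hβ : Function.Injective β)
    (hP : PreservesCross P β) {A A' : Finset Seg} (hA : IsPM P A) (h : IsFlip A A') :
    ∃ F, IsRBFlip (twin β A) F ∧ IsRBFlip F (twin β A') := by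
  obtain ⟨x1, y1, x2, y2, hc, hnc, h1, h2, hA'⟩ := h.exists_darts_eq hA.1
  obtain ⟨hxy1, hx12, hx1y2, hy1x2, hy12, hxy2⟩ := hc.ne
  obtain ⟨hx1, hy1⟩ := hA.mem_of_mem_darts h1
  obtain ⟨hx2, hy2⟩ := hA.mem_of_mem_darts h2
  have hmem : ∀ a b, (b, a) ∈ darts A → (a, b) ≠ (x1, y1) → (a, b) ≠ (x2, y2) →
      (a, β b) ∈ (rewire (darts A) x1 y1 x2 y2).image (Prod.map (id : Pl → Pl) β) := by
    intro a b h ne1 ne2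
    exact Finset.mem_image.2
      ⟨(a, b), mem_rewire.2 (Or.inl ⟨mem_darts_comm.1 h, ne1, ne2⟩), rfl⟩
  refine ⟨(rewire (darts A) x1 y1 x2 y2).image (Prod.map id β),
    ⟨x1, β y1, x2, β y2, ?_, Finset.mem_image_of_mem _ h1, Finset.mem_image_of_mem _ h2, ?_,
      image_rewire hβ _ _ _ _ _⟩,
    ⟨y1, β x1, y2, β x2, ?_, hmem _ _ h1 ?_ ?_, hmem _ _ h2 ?_ ?_, ?_, ?_⟩⟩
  · exact (hP x1 hx1 y1 hy1 x2 hx2 y2 hy2 hxy1 hx12 hx1y2 hy1x2 hy12 hxy2).2 hc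
  · rwa [hP x1 hx1 y2 hy2 x2 hx2 y1 hy1 hx1y2 hx12 hxy1 hxy2.symm hy12.symm hy1x2.symm]
  · rw [hP y1 hy1 x1 hx1 y2 hy2 x2 hx2 hxy1.symm hy12 hy1x2 hx1y2 hx12 hxy2.symm,
      cross_swap_left, cross_swap_right]
    exact hc
  · simp [hxy1.symm]
  · simp [hy1x2]
  · simp [hx1y2.symm]
  · simp [hxy2.symm]
  · rw [hP y1 hy1 x2 hx2 y2 hy2 x1 hx1 hy1x2 hy12 hxy1.symm hxy2 hx12.symm hx1y2.symm,
      cross_swap_left, cross_swap_right, cross_comm]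
    exact hnc
  · rw [twin, hA', image_rewire hβ]
    rfl

section Interleave

variable {α : Type*} {m : ℕ}

def interleave (M : Fin (m + 1) → α) (F : Fin m → α) (j : Fin (2 * m + 1)) : α :=
  if h : j.val % 2 = 0 then M ⟨j / 2, by omega⟩ else F ⟨j / 2, by omega⟩

variable {M : Fin (m + 1) → α} {F : Fin m → α}

lemma forall_interleave {p : α → Prop} (hM : ∀ i, p (M i)) (hF : ∀ i, p (F i))
    (j : Fin (2 * m + 1)) : p (interleave M F j) := by
  unfold interleave
  split_ifs
  exacts [hM _, hF _]

lemma interleave_chain {r : α → α → Prop} (hMF : ∀ i : Fin m, r (M i.castSucc) (F i))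
    (hFM : ∀ i : Fin m, r (F i) (M i.succ)) (j : Fin (2 * m)) :
    r (interleave M F j.castSucc) (interleave M F j.succ) := by
  unfold interleave
  simp only [Fin.val_castSucc, Fin.val_succ]
  split_ifs
  · omega
  · convert hMF ⟨j / 2, by omega⟩ using 2
    · rfl
    · exact Fin.ext (by simp only; omega)
  · convert hFM ⟨j / 2, by omega⟩ using 2
    exact Fin.ext (by simp only [Fin.val_succ]; omega)
  · omega

end Interleave

/-- `2 · D_MM(n) ≤ D_RB(2n)`: from a flip sequence of length `m` of perfect
matchings of `n` segments, one obtains `2n` red and `2n` blue points carrying a red-blue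
perfect matching of `2n` segments with a flip sequence of length `2m`. -/
theorem stmt15 (n m : ℕ) (P : Finset Pl) (hP : P.card = 2 * n) (hgp : GenPos (P : Set Pl))
    (M : Fin (m + 1) → Finset Seg)
    (hpm : ∀ i, IsPM P (M i) ∧ (M i).card = n)
    (hflip : ∀ i : Fin m, IsFlip (M i.castSucc) (M i.succ)) :
    ∃ (R B : Finset Pl) (N : Fin (2 * m + 1) → Finset Seg),
      R.card = 2 * n ∧ B.card = 2 * n ∧ Disjoint R B ∧
      (∀ j, IsRBPM R B (N j) ∧ (N j).card = 2 * n) ∧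
      ∀ j : Fin (2 * m), IsRBFlip (N j.castSucc) (N j.succ) := by
  have hv : ((1, 0) : Pl) ≠ 0 := by simp
  obtain ⟨ε, hcross, hdisj⟩ := ((hgp.eventually_preservesCross (1, 0)).filter_mono
    nhdsWithin_le_nhds |>.and (eventually_disjoint_image_add_smul P hv)).exists
  set β : Pl → Pl := (· + ε • ((1, 0) : Pl))
  have hβ : Function.Injective β := add_left_injective _
  have htwin : ∀ i, IsRBPM P (P.image β) (twin β (M i)) := fun i =>
    isRBPM_twin hβ hdisj (hpm i).1
  choose F hF using fun i => exists_isRBFlip_twin hβ hcross (hpm i.castSucc).1 (hflip i)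
  have hN : ∀ j, IsRBPM P (P.image β) (interleave (fun i => twin β (M i)) F j) :=
    forall_interleave htwin fun i => (hF i).1.isRBPM hdisj (htwin i.castSucc)
  exact ⟨P, P.image β, interleave (fun i => twin β (M i)) F, hP,
    by rw [Finset.card_image_of_injective _ hβ, hP], hdisj,
    fun j => ⟨hN j, (hN j).card_eq.trans hP⟩,
    interleave_chain (fun i => (hF i).1) (fun i => (hF i).2)⟩
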